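/- Let R > 0 and let σ_xx, σ_yy, τ_xy be the Kirsch stress field for an infinite plate with a circular hole of radius R under unit uniaxial tension (as defined via r² = x²+y², c₂ = (x²−y²)/r², s₂ = 2xy/r², c₄ = c₂²−s₂², s₄ = 2c₂s₂). Then the hole boundary is traction-free: for every point (x,y) with x² + y² = R², writing n = (x/R, y/R) for the outward unit normal of the hole, one has σ_xx n₁ + τ_xy n₂ = 0 and τ_xy n₁ + σ_yy n₂ = 0. -/

import Mathlib

/-! On the hole boundary `R² / r² = 1`, so each stress component becomes a combination of the
angular factors `c₂, s₂, c₄, s₄`, which there are polynomials in the unit normal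
`n = (x/R, y/R)`. Both traction components are then polynomial multiples of `|n|² - 1`. -/

noncomputable section

/-- r² = x² + y². -/
def rsq (x y : ℝ) : ℝ := x ^ 2 + y ^ 2

/-- cos 2φ = (x² − y²)/r². -/
def c2 (x y : ℝ) : ℝ := (x ^ 2 - y ^ 2) / rsq x y

/-- sin 2φ = 2xy/r². -/
def s2 (x y : ℝ) : ℝ := 2 * x * y / rsq x y

/-- cos 4φ = cos²2φ − sin²2φ. -/
def c4 (x y : ℝ) : ℝ := c2 x y ^ 2 - s2 x y ^ 2

/-- sin 4φ = 2 sin 2φ cos 2φ. -/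
def s4 (x y : ℝ) : ℝ := 2 * c2 x y * s2 x y

/-- Kirsch stress component σ_xx for a hole of radius R under unit uniaxial tension. -/
def sigmaXX (R x y : ℝ) : ℝ :=
  1 - (R ^ 2 / rsq x y) * ((3 / 2) * c2 x y + c4 x y)
    + (3 * R ^ 4 / (2 * (rsq x y) ^ 2)) * c4 x y

/-- Kirsch stress component σ_yy. -/
def sigmaYY (R x y : ℝ) : ℝ :=
  -(R ^ 2 / rsq x y) * ((1 / 2) * c2 x y - c4 x y)
    - (3 * R ^ 4 / (2 * (rsq x y) ^ 2)) * c4 x y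

/-- Kirsch stress component τ_xy. -/
def tauXY (R x y : ℝ) : ℝ :=
  -(R ^ 2 / rsq x y) * ((1 / 2) * s2 x y + s4 x y)
    + (3 * R ^ 4 / (2 * (rsq x y) ^ 2)) * s4 x y

section OnCircle

variable {R x y : ℝ}

lemma c2_of_rsq_eq (hr : rsq x y = R ^ 2) : c2 x y = (x / R) ^ 2 - (y / R) ^ 2 := by
  rw [c2, hr]
  ring

lemma s2_of_rsq_eq (hr : rsq x y = R ^ 2) : s2 x y = 2 * (x / R) * (y / R) := by
  rw [s2, hr]
  ring

lemma sigmaXX_of_rsq_eq (hr : rsq x y = R ^ 2) (hR : R ≠ 0) :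
    sigmaXX R x y = 1 - 3 / 2 * c2 x y + c4 x y / 2 := by
  rw [sigmaXX, hr]
  field_simp
  ring

lemma sigmaYY_of_rsq_eq (hr : rsq x y = R ^ 2) (hR : R ≠ 0) :
    sigmaYY R x y = -(c2 x y / 2) - c4 x y / 2 := by
  rw [sigmaYY, hr]
  field_simp
  ring

lemma tauXY_of_rsq_eq (hr : rsq x y = R ^ 2) (hR : R ≠ 0) :
    tauXY R x y = -(s2 x y / 2) + s4 x y / 2 := by
  rw [tauXY, hr]
  field_simp
  ring

end OnCircle

/-- The hole boundary is traction-free for the Kirsch stress field: for every point (x,y)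
with x² + y² = R², writing n = (x/R, y/R) for the outward unit normal of the hole, one has
σ_xx n₁ + τ_xy n₂ = 0 and τ_xy n₁ + σ_yy n₂ = 0. -/
theorem stmt16 (R : ℝ) (hR : 0 < R) (x y : ℝ) (h : x ^ 2 + y ^ 2 = R ^ 2) :
    sigmaXX R x y * (x / R) + tauXY R x y * (y / R) = 0 ∧
    tauXY R x y * (x / R) + sigmaYY R x y * (y / R) = 0 := by
  have hr : rsq x y = R ^ 2 := h
  have hn : (x / R) ^ 2 + (y / R) ^ 2 = 1 := by
    rw [div_pow, div_pow, ← add_div, h, div_self (by positivity)]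
  rw [sigmaXX_of_rsq_eq hr hR.ne', sigmaYY_of_rsq_eq hr hR.ne', tauXY_of_rsq_eq hr hR.ne', c4, s4,
    c2_of_rsq_eq hr, s2_of_rsq_eq hr]
  constructor
  · linear_combination (x / R) * (((x / R) ^ 2 - 3 * (y / R) ^ 2) / 2 - 1) * hn
  · linear_combination (y / R) * ((3 * (x / R) ^ 2 - (y / R) ^ 2) / 2) * hn

end
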